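/- Let 𝒜 be an S-ring over a finite group H = E × F (internal direct product) such that both E and F are 𝒜-subgroups. If 𝒜 restricted to E equals the full group algebra ℚE, or 𝒜 restricted to F equals ℚF, then 𝒜 equals the tensor product 𝒜_E ⊗ 𝒜_F, i.e., every basic set of 𝒜 has the form RS with R a basic set of 𝒜_E and S a basic set of 𝒜_F. -/

import Mathlib

open scoped Classical Pointwise

noncomputable section

variable {H : Type*}

/-- The simple quantity of a subset `T` of `H` in the group algebra `ℚ H`. -/
def simpleQ [Group H] [Fintype H] (T : Set H) : MonoidAlgebra ℚ H :=
  ∑ h ∈ T.toFinset, MonoidAlgebra.single h (1 : ℚ)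

/-- An S-ring over a finite group `H`: a partition of `H` containing `{1}`,
closed under inversion, whose simple quantities span a subalgebra of `ℚ H`. -/
structure SRing (H : Type*) [Group H] [Fintype H] where
  basicSets : Set (Set H)
  exists_unique_mem : ∀ h : H, ∃! T, T ∈ basicSets ∧ h ∈ T
  nonempty_of_mem : ∀ T ∈ basicSets, T.Nonempty
  one_mem : ({1} : Set H) ∈ basicSets
  inv_mem : ∀ T ∈ basicSets, T⁻¹ ∈ basicSets
  mul_mem : ∀ T ∈ basicSets, ∀ S ∈ basicSets,
    simpleQ T * simpleQ S ∈ Submodule.span ℚ (simpleQ '' basicSets)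

namespace SRing

variable [Group H] [Fintype H]

/-- The underlying ℚ-subspace of the S-ring. -/
def carrier (A : SRing H) : Submodule ℚ (MonoidAlgebra ℚ H) :=
  Submodule.span ℚ (simpleQ '' A.basicSets)

/-- `S` is an `𝒜`-subset: its simple quantity lies in `𝒜`. -/
def IsSubset (A : SRing H) (S : Set H) : Prop := simpleQ S ∈ A.carrier

/-- The thin radical of the S-ring. -/
def thin (A : SRing H) : Set H := {g | ({g} : Set H) ∈ A.basicSets}

end SRing

/-- The radical of a subset `S`: elements `h` with `hS = Sh = S`. -/
def radSet [Group H] (S : Set H) : Set H := {h | {h} * S = S ∧ S * {h} = S}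

/-- The automorphism group of the Cayley digraph `Cay(H, T)`. -/
def cayAut [Group H] (T : Set H) : Subgroup (Equiv.Perm H) where
  carrier := {g | ∀ x y : H, y * x⁻¹ ∈ T ↔ g y * (g x)⁻¹ ∈ T}
  one_mem' := by intro x y; simp
  mul_mem' := by
    intro a b ha hb x y
    simpa [Equiv.Perm.mul_apply] using (hb x y).trans (ha (b x) (b y))
  inv_mem' := by
    intro a ha x y
    simpa using (ha (a⁻¹ x) (a⁻¹ y)).symm

/-- The automorphism group of an S-ring. -/
def SRing.aut [Group H] [Fintype H] (A : SRing H) : Subgroup (Equiv.Perm H) :=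
  ⨅ T ∈ A.basicSets, cayAut T

/-- The right regular representation of `H` inside `Sym(H)`. -/
def rightRegular (H : Type*) [Group H] : Subgroup (Equiv.Perm H) where
  carrier := Set.range fun h : H => Equiv.mulRight h
  one_mem' := ⟨1, by ext x; simp⟩
  mul_mem' := by
    rintro _ _ ⟨a, rfl⟩ ⟨b, rfl⟩
    exact ⟨b * a, by ext x; simp [mul_assoc]⟩
  inv_mem' := by
    rintro _ ⟨a, rfl⟩
    exact ⟨a⁻¹, by ext x; simp⟩

/-- The orbit of `h` under the stabilizer of the identity in `G ≤ Sym(H)`. -/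
def orbitOfStab [Group H] (G : Subgroup (Equiv.Perm H)) (h : H) : Set H :=
  {x | ∃ g ∈ G, g 1 = 1 ∧ g h = x}

/-- A Schurian S-ring: its basic sets are the orbits of the identity-stabilizer
of some overgroup of the right regular representation. -/
def SRing.IsSchurian [Group H] [Fintype H] (A : SRing H) : Prop :=
  ∃ G : Subgroup (Equiv.Perm H), rightRegular H ≤ G ∧
    A.basicSets = {S | ∃ h : H, S = orbitOfStab G h}

/-- A p-S-ring: all basic sets have `p`-power size. -/
def SRing.IsPSRing [Group H] [Fintype H] (A : SRing H) (p : ℕ) : Prop :=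
  ∀ T ∈ A.basicSets, ∃ k : ℕ, Nat.card T = p ^ k

/-- A decomposable S-ring: a nontrivial `E/F`-wreath product. -/
def SRing.Decomposable [Group H] [Fintype H] (A : SRing H) : Prop :=
  ∃ E F : Subgroup H, F.Normal ∧ F ≤ E ∧ E ≠ ⊤ ∧ F ≠ ⊥ ∧
    A.IsSubset ↑E ∧ A.IsSubset ↑F ∧
    ∀ T ∈ A.basicSets, T ⊆ ((E : Set H))ᶜ → (F : Set H) ⊆ radSet T

/-- The 2-closure of a permutation group `G ≤ Sym(Ω)`: all permutations
preserving every `G`-orbit on `Ω × Ω`. -/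
def twoClosure {Ω : Type*} (G : Subgroup (Equiv.Perm Ω)) : Subgroup (Equiv.Perm Ω) where
  carrier := {γ | ∀ a b : Ω, ∃ g ∈ G, g a = γ a ∧ g b = γ b}
  one_mem' := fun a b => ⟨1, G.one_mem, rfl, rfl⟩
  mul_mem' := by
    intro γ δ hγ hδ a b
    obtain ⟨g, hg, hga, hgb⟩ := hδ a b
    obtain ⟨g', hg', hg'a, hg'b⟩ := hγ (δ a) (δ b)
    exact ⟨g' * g, G.mul_mem hg' hg, by simp [Equiv.Perm.mul_apply, hga, hg'a],
      by simp [Equiv.Perm.mul_apply, hgb, hg'b]⟩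
  inv_mem' := by
    intro γ hγ a b
    obtain ⟨g, hg, hga, hgb⟩ := hγ (γ⁻¹ a) (γ⁻¹ b)
    have h1 : g (γ⁻¹ a) = a := by rw [hga]; exact γ.apply_symm_apply a
    have h2 : g (γ⁻¹ b) = b := by rw [hgb]; exact γ.apply_symm_apply b
    refine ⟨g⁻¹, G.inv_mem hg, ?_, ?_⟩
    · exact g.injective ((g.apply_symm_apply a).trans h1.symm)
    · exact g.injective ((g.apply_symm_apply b).trans h2.symm)

/-! If `𝒜_E = ℚE`, every `{e}` with `e ∈ E` is a basic set, and left translation by such a thin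
element permutes the basic sets. Write a point of a basic set `T` as `e f`; then `e⁻¹ • T` is a
basic set through `f`, so it lies in the 𝒜-subgroup `F` (an element of 𝒜 is constant on basic
sets), and `T = {e} * (e⁻¹ • T)`. The case `𝒜_F = ℚF` follows by applying this to `T⁻¹`. -/

section

variable [Group H] [Fintype H]

lemma coeff_simpleQ (T : Set H) (g : H) :
    (simpleQ T).coeff g = if g ∈ T then 1 else 0 := by
  simp [simpleQ, MonoidAlgebra.coeff_sum, MonoidAlgebra.coeff_single, Finsupp.single_apply]

lemma simpleQ_smul_set (g : H) (T : Set H) : simpleQ (g • T) = simpleQ {g} * simpleQ T := by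
  refine MonoidAlgebra.coeff_injective (Finsupp.ext fun h => ?_)
  have hg : simpleQ {g} = MonoidAlgebra.single g 1 := by simp [simpleQ]
  rw [hg, MonoidAlgebra.coeff_single_mul_apply, one_mul, coeff_simpleQ, coeff_simpleQ,
    Set.mem_smul_set_iff_inv_smul_mem, smul_eq_mul]

end

namespace SRing

variable [Group H] [Fintype H] (A : SRing H)

lemma eq_of_mem_of_mem {B C : Set H} (hB : B ∈ A.basicSets) (hC : C ∈ A.basicSets)
    {g : H} (hgB : g ∈ B) (hgC : g ∈ C) : B = C :=
  (A.exists_unique_mem g).unique ⟨hB, hgB⟩ ⟨hC, hgC⟩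

lemma coeff_eq_of_mem_carrier {x : MonoidAlgebra ℚ H} (hx : x ∈ A.carrier)
    {B : Set H} (hB : B ∈ A.basicSets) {g h : H} (hg : g ∈ B) (hh : h ∈ B) :
    x.coeff g = x.coeff h := by
  induction hx using Submodule.span_induction with
  | mem _ hT =>
    obtain ⟨T, hT, rfl⟩ := hT
    have hgh : g ∈ T ↔ h ∈ T :=
      ⟨fun hgT => A.eq_of_mem_of_mem hB hT hg hgT ▸ hh,
        fun hhT => A.eq_of_mem_of_mem hB hT hh hhT ▸ hg⟩
    simp only [coeff_simpleQ, hgh]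
  | zero => simp
  | add _ _ _ _ ha hb => simp [ha, hb]
  | smul _ _ _ ha => simp [ha]

lemma subset_of_isSubset {U : Set H} (hU : A.IsSubset U) {B : Set H} (hB : B ∈ A.basicSets)
    {g : H} (hgB : g ∈ B) (hgU : g ∈ U) : B ⊆ U := by
  intro h hhB
  by_contra hhU
  simpa [coeff_simpleQ, hgU, hhU] using A.coeff_eq_of_mem_carrier hU hB hgB hhB

lemma isSubset_smul_set {g : H} (hg : {g} ∈ A.basicSets) {T : Set H} (hT : T ∈ A.basicSets) :
    A.IsSubset (g • T) := by
  rw [IsSubset, simpleQ_smul_set]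
  exact A.mul_mem _ hg _ hT

/-- The basic set `B` through `g t` lies in the 𝒜-subset `g • T`, and `T` lies in `g⁻¹ • B`. -/
lemma smul_set_mem_basicSets {g : H} (hg : {g} ∈ A.basicSets) {T : Set H}
    (hT : T ∈ A.basicSets) : g • T ∈ A.basicSets := by
  obtain ⟨t, ht⟩ := A.nonempty_of_mem T hT
  obtain ⟨B, ⟨hB, hgtB⟩, -⟩ := A.exists_unique_mem (g • t)
  have hg_inv : {g⁻¹} ∈ A.basicSets := by simpa using A.inv_mem _ hg
  have hBT : B ⊆ g • T :=
    A.subset_of_isSubset (A.isSubset_smul_set hg hT) hB hgtB (Set.smul_mem_smul_set ht)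
  have hTB : g • T ⊆ B := Set.smul_set_subset_iff_subset_inv_smul_set.mpr <|
    A.subset_of_isSubset (A.isSubset_smul_set hg_inv hB) hT ht
      (Set.mem_smul_set_iff_inv_smul_mem.mpr (by simpa using hgtB))
  exact hTB.antisymm hBT ▸ hB

lemma singleton_mem_basicSets_of_forall_subsingleton {K : Set H} (hK : A.IsSubset K)
    (hfull : ∀ T ∈ A.basicSets, T ⊆ K → T.Subsingleton) {g : H} (hg : g ∈ K) :
    {g} ∈ A.basicSets := by
  obtain ⟨B, ⟨hB, hgB⟩, -⟩ := A.exists_unique_mem g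
  rwa [← (hfull B hB (A.subset_of_isSubset hK hB hgB hg)).eq_singleton_of_mem hgB]

lemma exists_eq_singleton_mul {K L : Set H} (hK : A.IsSubset K) (hL : A.IsSubset L)
    (hfull : ∀ T ∈ A.basicSets, T ⊆ K → T.Subsingleton) {T : Set H}
    (hT : T ∈ A.basicSets) {k l : H} (hk : k ∈ K) (hl : l ∈ L) (hkl : k * l ∈ T) :
    ∃ S ∈ A.basicSets, S ⊆ L ∧ T = {k} * S := by
  have hk_inv : {k⁻¹} ∈ A.basicSets := by
    simpa using A.inv_mem _ (A.singleton_mem_basicSets_of_forall_subsingleton hK hfull hk)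
  have hS := A.smul_set_mem_basicSets hk_inv hT
  refine ⟨k⁻¹ • T, hS, A.subset_of_isSubset hL hS ?_ hl, ?_⟩
  · exact Set.mem_smul_set_iff_inv_smul_mem.mpr (by simpa using hkl)
  · rw [Set.singleton_mul]
    change T = k • k⁻¹ • T
    rw [smul_inv_smul]

end SRing

theorem stmt6_general {H : Type*} [Group H] [Fintype H] (A : SRing H)
    (E F : Subgroup H) (hFn : F.Normal)
    (hsup : E ⊔ F = ⊤)
    (hE : A.IsSubset ↑E) (hF : A.IsSubset ↑F)
    (hfull : (∀ T ∈ A.basicSets, T ⊆ (E : Set H) → T.Subsingleton) ∨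
             (∀ T ∈ A.basicSets, T ⊆ (F : Set H) → T.Subsingleton)) :
    ∀ T ∈ A.basicSets, ∃ R S : Set H, R ∈ A.basicSets ∧ S ∈ A.basicSets ∧
      R ⊆ (E : Set H) ∧ S ⊆ (F : Set H) ∧ T = R * S := by
  intro T hT
  obtain ⟨t, ht⟩ := A.nonempty_of_mem T hT
  obtain ⟨e, he, f, hf, rfl⟩ := Subgroup.mem_sup_of_normal_right.mp (hsup ▸ Subgroup.mem_top t)
  rcases hfull with hfullE | hfullF
  · obtain ⟨S, hS, hSF, rfl⟩ := A.exists_eq_singleton_mul hE hF hfullE hT he hf ht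
    exact ⟨{e}, S, A.singleton_mem_basicSets_of_forall_subsingleton hE hfullE he, hS,
      Set.singleton_subset_iff.mpr he, hSF, rfl⟩
  · obtain ⟨R, hR, hRE, hTR⟩ := A.exists_eq_singleton_mul hF hE hfullF (A.inv_mem T hT)
      (inv_mem hf) (inv_mem he) (by simpa using ht)
    refine ⟨R⁻¹, {f}, A.inv_mem R hR,
      A.singleton_mem_basicSets_of_forall_subsingleton hF hfullF hf, ?_,
      Set.singleton_subset_iff.mpr hf, ?_⟩
    · exact fun x hx => inv_inv x ▸ E.inv_mem (hRE hx)
    · rw [← inv_inv T, hTR, mul_inv_rev, Set.inv_singleton, inv_inv]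

/-- if `H = E × F` internally, both are 𝒜-subgroups and one of the
induced S-subrings is the full group algebra, then 𝒜 is the tensor product. -/
theorem stmt6 {H : Type*} [Group H] [Fintype H] (A : SRing H)
    (E F : Subgroup H) (hEn : E.Normal) (hFn : F.Normal)
    (hdis : Disjoint E F) (hsup : E ⊔ F = ⊤)
    (hE : A.IsSubset ↑E) (hF : A.IsSubset ↑F)
    (hfull : (∀ T ∈ A.basicSets, T ⊆ (E : Set H) → T.Subsingleton) ∨
             (∀ T ∈ A.basicSets, T ⊆ (F : Set H) → T.Subsingleton)) :
    ∀ T ∈ A.basicSets, ∃ R S : Set H, R ∈ A.basicSets ∧ S ∈ A.basicSets ∧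
      R ⊆ (E : Set H) ∧ S ⊆ (F : Set H) ∧ T = R * S :=
  stmt6_general A E F hFn hsup hE hF hfull

end
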